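/- For every complex number s with Re(s) ≥ 1, the logarithmic derivative of the Gamma function satisfies |Γ'(s)/Γ(s)| ≤ 11/3 + log(|s| + 1). -/

import Mathlib

/-!
On `0 < re s` the digamma function has the series expansion
`ψ s = -γ + ∑ₙ (1 / (n + 1) - 1 / (n + s))`: both sides are holomorphic there, and on `[1, 2]` they
agree because the convexity of `log ∘ Γ` makes `ψ` increasing on `(0, ∞)`, which traps
`ψ (x + n) - ψ (n + 1)` in `[0, 1 / (n + 1)]`. For `1 ≤ re s` the `n`-th term equals
`(s - 1) / ((n + 1) (n + s))`, of norm at most `1 / (n + 1)` and at most `‖s - 1‖ / (n + 1) ^ 2`;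
using the first bound for `n < N ≈ ‖s - 1‖` and the second beyond gives
`‖ψ s‖ ≤ γ + 2 + log (‖s‖ + 1)`.
-/

open Filter Topology Set

local notation "γ" => Real.eulerMascheroniConstant

namespace Real

lemma monotoneOn_logDeriv_Gamma : MonotoneOn (logDeriv Gamma) (Ioi 0) := by
  have hdiff {x : ℝ} (hx : x ∈ Ioi 0) : DifferentiableAt ℝ Gamma x :=
    differentiableAt_Gamma fun m => ((neg_nonpos.2 m.cast_nonneg).trans_lt hx).ne'
  refine (convexOn_log_Gamma.monotoneOn_deriv fun x hx => ?_).congr fun x hx => ?_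
  · exact (hdiff hx).log (Gamma_pos_of_pos hx).ne'
  · exact deriv_log_comp_eq_logDeriv (hdiff hx) (Gamma_pos_of_pos hx).ne'

end Real

lemma tsum_inv_natCast_add_sq_le {N : ℕ} (hN : N ≠ 0) :
    ∑' n : ℕ, ((n + N + 1 : ℝ) ^ 2)⁻¹ ≤ (N : ℝ)⁻¹ := by
  refine Real.tsum_le_of_sum_range_le (fun n => by positivity) fun m => ?_
  calc ∑ n ∈ Finset.range m, ((n + N + 1 : ℝ) ^ 2)⁻¹
        = ∑ i ∈ Finset.Ioc N (N + m), ((i : ℝ) ^ 2)⁻¹ := by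
        rw [← Finset.Ico_add_one_add_one_eq_Ioc, Finset.sum_Ico_eq_sum_range,
          add_tsub_add_eq_tsub_right, add_tsub_cancel_left]
        exact Finset.sum_congr rfl fun n _ => by push_cast; ring
    _ ≤ (N : ℝ)⁻¹ - ((N + m : ℕ) : ℝ)⁻¹ := sum_Ioc_inv_sq_le_sub hN (Nat.le_add_right N m)
    _ ≤ (N : ℝ)⁻¹ := sub_le_self _ (by positivity)

namespace Complex

lemma ne_neg_natCast_of_re_pos {s : ℂ} (hs : 0 < s.re) (m : ℕ) : s ≠ -m := by
  rintro rfl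
  simp at hs
  exact m.cast_nonneg.not_gt hs

lemma natCast_add_ne_zero_of_re_pos {s : ℂ} (hs : 0 < s.re) (n : ℕ) : (n : ℂ) + s ≠ 0 :=
  fun h => ne_neg_natCast_of_re_pos hs n (eq_neg_of_add_eq_zero_right h)

lemma digamma_add_nat {s : ℂ} (hs : ∀ m : ℕ, s ≠ -m) (n : ℕ) :
    digamma (s + n) = digamma s + ∑ k ∈ Finset.range n, (s + k)⁻¹ := by
  induction n with
  | zero => simp
  | succ n ih =>
    have hsn : ∀ m : ℕ, s + n ≠ -m := fun m h =>
      hs (m + n) (by push_cast; linear_combination h)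
    rw [Nat.cast_succ, ← add_assoc, digamma_apply_add_one _ hsn, ih, Finset.sum_range_succ,
      add_assoc]

lemma deriv_Gamma_ofReal {x : ℝ} (hx : 0 < x) :
    deriv Gamma x = ((deriv Real.Gamma x : ℝ) : ℂ) := by
  have hx' : ∀ m : ℕ, x ≠ -m := fun m => ((neg_nonpos.2 m.cast_nonneg).trans_lt hx).ne'
  have hc : HasDerivAt (fun y : ℝ => Gamma y) (deriv Gamma x) x :=
    (differentiableAt_Gamma _ (ne_neg_natCast_of_re_pos (by simpa using hx))).hasDerivAt.comp_ofReal
  have hr : HasDerivAt (fun y : ℝ => (Real.Gamma y : ℂ)) ((deriv Real.Gamma x : ℝ) : ℂ) x :=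
    (Real.differentiableAt_Gamma hx').hasDerivAt.ofReal_comp
  simp only [← Gamma_ofReal] at hr
  exact hc.unique hr

lemma digamma_ofReal {x : ℝ} (hx : 0 < x) : digamma x = logDeriv Real.Gamma x := by
  rw [digamma_def, logDeriv_apply, logDeriv_apply, deriv_Gamma_ofReal hx, Gamma_ofReal, ofReal_div]

lemma norm_digamma_sub_digamma_le {a y : ℝ} (ha : 0 < a) (hay : a ≤ y) (hya : y ≤ a + 1) :
    ‖digamma y - digamma a‖ ≤ a⁻¹ := by
  have hy : 0 < y := ha.trans_le hay
  have hshift : logDeriv Real.Gamma (a + 1) = logDeriv Real.Gamma a + a⁻¹ := by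
    have := digamma_apply_add_one (a : ℂ) (ne_neg_natCast_of_re_pos (by simpa using ha))
    rw [← ofReal_one, ← ofReal_add, digamma_ofReal (by positivity), digamma_ofReal ha,
      ← ofReal_inv, ← ofReal_add] at this
    exact_mod_cast this
  have h₁ := Real.monotoneOn_logDeriv_Gamma ha hy hay
  have h₂ := Real.monotoneOn_logDeriv_Gamma hy (by simp; positivity) hya
  rw [digamma_ofReal hy, digamma_ofReal ha, ← ofReal_sub, norm_real, Real.norm_eq_abs, abs_le]
  constructor <;> linarith

noncomputable def digammaSeriesTerm (s : ℂ) (n : ℕ) : ℂ := 1 / (n + 1) - 1 / (n + s)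

lemma digammaSeriesTerm_eq_div {s : ℂ} (hs : 0 < s.re) (n : ℕ) :
    digammaSeriesTerm s n = (s - 1) / ((n + 1) * (n + s)) := by
  have := natCast_add_ne_zero_of_re_pos hs n
  rw [digammaSeriesTerm, div_sub_div _ _ (Nat.cast_add_one_ne_zero n) this]
  ring_nf

lemma norm_digammaSeriesTerm {s : ℂ} (hs : 0 < s.re) (n : ℕ) :
    ‖digammaSeriesTerm s n‖ = ‖s - 1‖ / ((n + 1) * ‖(n : ℂ) + s‖) := by
  rw [digammaSeriesTerm_eq_div hs, norm_div, norm_mul, ← Nat.cast_add_one, norm_natCast,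
    Nat.cast_add_one]

lemma norm_digammaSeriesTerm_le {s : ℂ} {δ : ℝ} (hδ : 0 < δ) (hδ₁ : δ ≤ 1) (hs : δ ≤ s.re)
    (n : ℕ) : ‖digammaSeriesTerm s n‖ ≤ ‖s - 1‖ / δ * ((n + 1 : ℝ) ^ 2)⁻¹ := by
  have hn : (0 : ℝ) ≤ n := n.cast_nonneg
  have hlow : δ * (n + 1) ≤ ‖(n : ℂ) + s‖ :=
    calc δ * (n + 1) ≤ n + s.re := by nlinarith
      _ = ((n : ℂ) + s).re := by simp
      _ ≤ _ := re_le_norm _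
  calc ‖digammaSeriesTerm s n‖ = ‖s - 1‖ / ((n + 1) * ‖(n : ℂ) + s‖) :=
        norm_digammaSeriesTerm (hδ.trans_le hs) n
    _ ≤ ‖s - 1‖ / ((n + 1) * (δ * (n + 1))) := by gcongr
    _ = ‖s - 1‖ / δ * ((n + 1 : ℝ) ^ 2)⁻¹ := by field_simp

lemma summable_inv_natCast_add_one_sq : Summable fun n : ℕ => ((n + 1 : ℝ) ^ 2)⁻¹ := by
  simpa using (summable_nat_add_iff 1).mpr (Real.summable_nat_pow_inv.mpr one_lt_two)

lemma summable_digammaSeriesTerm {s : ℂ} (hs : 0 < s.re) : Summable (digammaSeriesTerm s) :=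
  .of_norm_bounded (summable_inv_natCast_add_one_sq.mul_left _)
    (norm_digammaSeriesTerm_le (lt_min hs one_pos) (min_le_right _ _) (min_le_left _ _))

lemma differentiableOn_digammaSeriesTerm (n : ℕ) :
    DifferentiableOn ℂ (digammaSeriesTerm · n) {s | 0 < s.re} :=
  (differentiableOn_const _).sub <| (differentiableOn_const _).div
    ((differentiableOn_const _).add differentiableOn_id)
    fun _ hs => natCast_add_ne_zero_of_re_pos hs n

lemma differentiableOn_tsum_digammaSeriesTerm :
    DifferentiableOn ℂ (fun s => ∑' n, digammaSeriesTerm s n) {s | 0 < s.re} := by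
  intro s₀ (hs₀ : 0 < s₀.re)
  set δ := min s₀.re 1 / 2 with hδ_def
  have hδ : 0 < δ := half_pos (lt_min hs₀ one_pos)
  have hδ₁ : δ ≤ 1 := by linarith [min_le_right s₀.re 1]
  set V := {s : ℂ | δ < s.re} ∩ Metric.ball 0 (‖s₀‖ + 1)
  have hV : IsOpen V := (isOpen_lt continuous_const continuous_re).inter Metric.isOpen_ball
  have hs₀V : s₀ ∈ V :=
    ⟨show δ < s₀.re by linarith [min_le_left s₀.re 1], by simp⟩
  have hbound (n : ℕ) (s : ℂ) (hs : s ∈ V) :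
      ‖digammaSeriesTerm s n‖ ≤ (‖s₀‖ + 2) / δ * ((n + 1 : ℝ) ^ 2)⁻¹ := by
    refine (norm_digammaSeriesTerm_le hδ hδ₁ hs.1.le n).trans ?_
    have : ‖s‖ < ‖s₀‖ + 1 := by simpa using hs.2
    gcongr
    linarith [norm_sub_le s 1, norm_one (α := ℂ)]
  have hdiff := differentiableOn_tsum_of_summable_norm
    (summable_inv_natCast_add_one_sq.mul_left _)
    (fun n => (differentiableOn_digammaSeriesTerm n).mono fun s hs => hδ.trans hs.1) hV hbound
  exact (hdiff.differentiableAt (hV.mem_nhds hs₀V)).differentiableWithinAt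

lemma analyticOnNhd_digamma : AnalyticOnNhd ℂ digamma {s | 0 < s.re} := by
  have hG : AnalyticOnNhd ℂ Gamma {s | 0 < s.re} :=
    DifferentiableOn.analyticOnNhd (fun s hs =>
      (differentiableAt_Gamma s (ne_neg_natCast_of_re_pos hs)).differentiableWithinAt)
      (isOpen_lt continuous_const continuous_re)
  exact hG.deriv.div hG fun s hs => Gamma_ne_zero (ne_neg_natCast_of_re_pos hs)

lemma neg_eulerMascheroni_add_sum_digammaSeriesTerm {s : ℂ} (hs : ∀ m : ℕ, s ≠ -m) (n : ℕ) :
    -γ + ∑ k ∈ Finset.range n, digammaSeriesTerm s k =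
      digamma s - (digamma (s + n) - digamma (1 + n)) := by
  have h1 : ∀ m : ℕ, (1 : ℂ) ≠ -m := ne_neg_natCast_of_re_pos (by simp)
  rw [digamma_add_nat hs, digamma_add_nat h1, digamma_one]
  simp only [digammaSeriesTerm, Finset.sum_sub_distrib, one_div, add_comm (1 : ℂ), add_comm s]
  ring

lemma digamma_ofReal_eq_tsum {x : ℝ} (h₁ : 1 ≤ x) (h₂ : x ≤ 2) :
    digamma x = -γ + ∑' n, digammaSeriesTerm x n := by
  have hx : 0 < (x : ℂ).re := by simp; linarith
  have hsum := (summable_digammaSeriesTerm hx).hasSum.tendsto_sum_nat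
  refine tendsto_nhds_unique ?_ (tendsto_const_nhds.add hsum)
  simp_rw [neg_eulerMascheroni_add_sum_digammaSeriesTerm (ne_neg_natCast_of_re_pos hx)]
  suffices Tendsto (fun n : ℕ => digamma (x + n) - digamma (1 + n)) atTop (𝓝 0) by
    simpa using tendsto_const_nhds.sub this
  refine squeeze_zero_norm (fun n => ?_) tendsto_one_div_add_atTop_nhds_zero_nat
  have := norm_digamma_sub_digamma_le (a := n + 1) (y := x + n) (by positivity) (by linarith)
    (by linarith)
  push_cast at this
  simpa [add_comm (1 : ℂ), one_div] using this

lemma frequently_nhdsNE_ofReal {p : ℂ → Prop} {x : ℝ} (h : ∀ᶠ y : ℝ in 𝓝 x, p y) :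
    ∃ᶠ z in 𝓝[≠] (x : ℂ), p z :=
  (continuous_ofReal.continuousWithinAt.tendsto_nhdsWithin fun _ hy => ofReal_injective.ne hy
    ).frequently (eventually_nhdsWithin_of_eventually_nhds (s := {x}ᶜ) h).frequently

theorem digamma_eq_tsum {s : ℂ} (hs : 0 < s.re) :
    digamma s = -γ + ∑' n, digammaSeriesTerm s n := by
  have hseries : AnalyticOnNhd ℂ (fun s => -γ + ∑' n, digammaSeriesTerm s n) {s | 0 < s.re} :=
    ((differentiableOn_const _).add differentiableOn_tsum_digammaSeriesTerm).analyticOnNhd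
      (isOpen_lt continuous_const continuous_re)
  have hagree : ∀ᶠ x : ℝ in 𝓝 (3 / 2), digamma x = -γ + ∑' n, digammaSeriesTerm x n :=
    Filter.mem_of_superset (Icc_mem_nhds (by norm_num) (by norm_num)) fun x hx =>
      digamma_ofReal_eq_tsum hx.1 hx.2
  exact analyticOnNhd_digamma.eqOn_of_preconnected_of_frequently_eq hseries
    (convex_halfSpace_re_gt 0).isPreconnected (by norm_num : (0 : ℝ) < ((3 / 2 : ℝ) : ℂ).re)
    (frequently_nhdsNE_ofReal hagree) hs

lemma norm_sub_one_le_norm_natCast_add {s : ℂ} (hs : 1 ≤ s.re) (n : ℕ) :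
    ‖s - 1‖ ≤ ‖(n : ℂ) + s‖ := by
  rw [norm_def, norm_def, normSq_apply, normSq_apply]
  refine Real.sqrt_le_sqrt ?_
  simp only [sub_re, sub_im, one_re, one_im, add_re, add_im, natCast_re, natCast_im]
  nlinarith [n.cast_nonneg (α := ℝ)]

lemma norm_digammaSeriesTerm_le_inv {s : ℂ} (hs : 1 ≤ s.re) (n : ℕ) :
    ‖digammaSeriesTerm s n‖ ≤ (n + 1 : ℝ)⁻¹ := by
  have hs₀ : 0 < s.re := one_pos.trans_le hs
  have hpos : 0 < ‖(n : ℂ) + s‖ := norm_pos_iff.mpr (natCast_add_ne_zero_of_re_pos hs₀ n)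
  rw [norm_digammaSeriesTerm hs₀, div_le_iff₀ (by positivity),
    inv_mul_cancel_left₀ (by positivity)]
  exact norm_sub_one_le_norm_natCast_add hs n

lemma tsum_norm_digammaSeriesTerm_le {s : ℂ} (hs : 1 ≤ s.re) :
    ∑' n, ‖digammaSeriesTerm s n‖ ≤ 2 + Real.log (‖s - 1‖ + 1) := by
  set r := ‖s - 1‖
  set N := ⌊r⌋₊ + 1
  have hN : N ≠ 0 := Nat.succ_ne_zero _
  have hsum := (summable_digammaSeriesTerm (one_pos.trans_le hs)).norm
  have hhead : ∑ n ∈ Finset.range N, ‖digammaSeriesTerm s n‖ ≤ 1 + Real.log N :=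
    calc _ ≤ ∑ n ∈ Finset.range N, (n + 1 : ℝ)⁻¹ :=
          Finset.sum_le_sum fun n _ => norm_digammaSeriesTerm_le_inv hs n
      _ = harmonic N := by simp [harmonic]
      _ ≤ 1 + Real.log N := harmonic_le_one_add_log N
  have htail : ∑' n, ‖digammaSeriesTerm s (n + N)‖ ≤ 1 :=
    calc _ ≤ ∑' n : ℕ, r * ((n + N + 1 : ℝ) ^ 2)⁻¹ := by
          have hmaj := ((summable_nat_add_iff N).mpr summable_inv_natCast_add_one_sq).mul_left r
          push_cast at hmaj
          refine ((summable_nat_add_iff N).mpr hsum).tsum_le_tsum (fun n => ?_) hmaj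
          simpa [add_assoc] using norm_digammaSeriesTerm_le one_pos le_rfl hs (n + N)
      _ ≤ r * (N : ℝ)⁻¹ := by
          rw [tsum_mul_left]
          exact mul_le_mul_of_nonneg_left (tsum_inv_natCast_add_sq_le hN) (norm_nonneg _)
      _ ≤ 1 := by
          rw [mul_inv_le_iff₀ (by positivity), one_mul]
          exact_mod_cast (Nat.lt_floor_add_one r).le
  have hlog : Real.log N ≤ Real.log (r + 1) :=
    Real.log_le_log (by positivity) (by simpa [N] using Nat.floor_le (norm_nonneg _))
  rw [← hsum.sum_add_tsum_nat_add N]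
  linarith

theorem norm_digamma_le {s : ℂ} (hs : 1 ≤ s.re) :
    ‖digamma s‖ ≤ γ + 2 + Real.log (‖s‖ + 1) := by
  have hs₀ : 0 < s.re := one_pos.trans_le hs
  have hγ : ‖(-γ : ℂ)‖ = γ := by
    rw [norm_neg, norm_real,
      Real.norm_of_nonneg (by linarith [Real.one_half_lt_eulerMascheroniConstant])]
  have hs₁ : ‖s - 1‖ ≤ ‖s‖ := by simpa using norm_sub_one_le_norm_natCast_add hs 0
  calc ‖digamma s‖ ≤ ‖(-γ : ℂ)‖ + ‖∑' n, digammaSeriesTerm s n‖ := by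
        rw [digamma_eq_tsum hs₀]
        exact norm_add_le _ _
    _ ≤ γ + ∑' n, ‖digammaSeriesTerm s n‖ := by
        grw [hγ, norm_tsum_le_tsum_norm (summable_digammaSeriesTerm hs₀).norm]
    _ ≤ γ + (2 + Real.log (‖s - 1‖ + 1)) := by grw [tsum_norm_digammaSeriesTerm_le hs]
    _ ≤ γ + 2 + Real.log (‖s‖ + 1) := by
        grw [hs₁]
        rw [add_assoc]

end Complex

theorem abs_digamma_le (s : ℂ) (hs : 1 ≤ s.re) :
    ‖deriv Complex.Gamma s / Complex.Gamma s‖ ≤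
      11 / 3 + Real.log (‖s‖ + 1) := by
  rw [← logDeriv_apply, ← Complex.digamma_def]
  linarith [Complex.norm_digamma_le hs, Real.eulerMascheroniConstant_lt_two_thirds]
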